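/- Let p be a prime and let S ⊂ ℚ_p be a scaling set. Then lim_{n→∞} 1_{p^{n}S}(ξ) = 0 for almost every ξ ∈ ℚ_p. -/

import Mathlib

/-!
Multiplication by `p` scales Haar measure by the constant `Δ(p) = μ(pℤ_p) < 1`, so
`μ(pⁿS) = Δ(p)ⁿ μ(S)`. A scaling set has finite measure: otherwise `1_S` is not integrable,
its inverse Fourier transform is `0` by convention, and `0` has no orthonormal translates.
Hence `∑ μ(pⁿS) < ∞`, and by Borel–Cantelli almost every `ξ` lies in only finitely many `pⁿS`.
-/

open MeasureTheory Filter Topology Set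
open scoped ENNReal ComplexConjugate

noncomputable section

namespace PadicScaling

attribute [local instance] Classical.propDecidable

variable (p : ℕ) [hp : Fact p.Prime]

instance : MeasurableSpace ℚ_[p] := borel _
instance : BorelSpace ℚ_[p] := ⟨rfl⟩

/-- The closed unit ball `ℤ_p = {x : |x|_p ≤ 1}` as a positive compact set. -/
def unitBallPC : TopologicalSpace.PositiveCompacts ℚ_[p] where
  carrier := Metric.closedBall 0 1
  isCompact' := isCompact_closedBall 0 1
  interior_nonempty' :=
    ⟨0, interior_maximal Metric.ball_subset_closedBall Metric.isOpen_ball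
      (Metric.mem_ball_self one_pos)⟩

/-- The Haar measure on `ℚ_p`, normalized so that `μ(ℤ_p) = 1`. -/
def μp : Measure ℚ_[p] := Measure.addHaarMeasure (unitBallPC p)

/-- The dilate `c·S = {c·x : x ∈ S}` of a set `S ⊆ ℚ_p`. -/
def dil (c : ℚ_[p]) (S : Set ℚ_[p]) : Set ℚ_[p] := (fun x => c * x) '' S

/-- The ball `B_γ(0) = {x : |x|_p ≤ p^γ}`. -/
def ball (γ : ℤ) : Set ℚ_[p] := {x : ℚ_[p] | ‖x‖ ≤ (p : ℝ) ^ γ}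

/-- The fractional part `{x}_p` of a `p`-adic number, as a rational number:
the unique rational `q` of the form `k/p^m` with `0 ≤ q < 1` and `x - q ∈ ℤ_p`. -/
def padicFract (x : ℚ_[p]) : ℚ :=
  if h : ∃ q : ℚ, (0 ≤ q ∧ q < 1 ∧ ∃ m k : ℕ, q = (k : ℚ) / (p : ℚ) ^ m) ∧
      ‖x - (q : ℚ_[p])‖ ≤ 1 then h.choose else 0

/-- The standard additive character `χ_p(x) = e^{2πi {x}_p}` of `ℚ_p`. -/
def chi (x : ℚ_[p]) : ℂ := Complex.exp (2 * Real.pi * Complex.I * (padicFract p x : ℂ))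

/-- The set `I_p` of `p`-adic fractional numbers, i.e. numbers of the form
`k/p^m` with `0 ≤ k < p^m`. -/
def Ip : Set ℚ_[p] := {x | ∃ m k : ℕ, k < p ^ m ∧ x = (k : ℚ_[p]) / (p : ℚ_[p]) ^ m}

/-- The Fourier transform `f̂(ξ) = ∫ χ_p(ξ x) f(x) dx` on `ℚ_p`. -/
def FT (f : ℚ_[p] → ℂ) : ℚ_[p] → ℂ := fun ξ => ∫ x, chi p (ξ * x) * f x ∂(μp p)

/-- The inverse Fourier transform `f̌(ξ) = ∫ χ_p(-ξ x) f(x) dx` on `ℚ_p`. -/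
def invFT (f : ℚ_[p] → ℂ) : ℚ_[p] → ℂ := fun ξ => ∫ x, chi p (-(ξ * x)) * f x ∂(μp p)

/-- `f`, as an element of `L²(ℚ_p)`, belongs to the subspace `V`. -/
def inL2 (f : ℚ_[p] → ℂ) (V : Submodule ℂ (Lp ℂ 2 (μp p))) : Prop :=
  ∃ hf : MemLp f 2 (μp p), hf.toLp f ∈ V

/-- The set of `L²`-classes of the translates `φ(· - a)`, `a ∈ I_p`. -/
def translatesSet (φ : ℚ_[p] → ℂ) : Set (Lp ℂ 2 (μp p)) :=
  {h | ∃ a ∈ Ip p, ∃ hm : MemLp (fun x => φ (x - a)) 2 (μp p), h = hm.toLp _}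

/-- A multiresolution analysis of `L²(ℚ_p)` with scaling function `φ`:
an increasing family of closed subspaces `V j` with dense union and trivial
intersection, compatible with dilation by `p⁻¹`, such that the `I_p`-translates
of `φ` form an orthonormal basis of `V 0`. -/
structure IsMRA (V : ℤ → Submodule ℂ (Lp ℂ 2 (μp p))) (φ : ℚ_[p] → ℂ) : Prop where
  mono : ∀ j : ℤ, V j ≤ V (j + 1)
  closed : ∀ j : ℤ, IsClosed (V j : Set (Lp ℂ 2 (μp p)))
  dense_union : Dense (⋃ j : ℤ, (V j : Set (Lp ℂ 2 (μp p))))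
  trivial_inter : (⋂ j : ℤ, (V j : Set (Lp ℂ 2 (μp p)))) = {0}
  dilate : ∀ (j : ℤ) (f : ℚ_[p] → ℂ),
    inL2 p f (V j) ↔ inL2 p (fun x => f ((p : ℚ_[p])⁻¹ * x)) (V (j + 1))
  phi_mem : inL2 p φ (V 0)
  orthonormal : ∀ a ∈ Ip p, ∀ b ∈ Ip p,
    ∫ x, φ (x - a) * conj (φ (x - b)) ∂(μp p) = if a = b then 1 else 0
  complete : (Submodule.span ℂ (translatesSet p φ)).topologicalClosure = V 0

/-- `φ` is a scaling function of some MRA of `L²(ℚ_p)`. -/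
def IsScalingFunction (φ : ℚ_[p] → ℂ) : Prop :=
  ∃ V : ℤ → Submodule ℂ (Lp ℂ 2 (μp p)), IsMRA p V φ

/-- A measurable set `S ⊆ ℚ_p` is a scaling set if `(1_S)ˇ` is a scaling function
of an MRA in `L²(ℚ_p)`. -/
def IsScalingSet (S : Set ℚ_[p]) : Prop :=
  MeasurableSet S ∧ IsScalingFunction p (invFT p (Set.indicator S 1))

/-- The dilated translate `x ↦ p^{j/2} ψ(p^{-j} x - a)`. -/
def wdil (ψ : ℚ_[p] → ℂ) (j : ℤ) (a : ℚ_[p]) : ℚ_[p] → ℂ :=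
  fun x => ((((p : ℝ) ^ ((j : ℝ) / 2) : ℝ)) : ℂ) * ψ ((p : ℚ_[p]) ^ (-j) * x - a)

/-- The `L²`-classes of the affine system `p^{j/2} ψ_n(p^{-j}· - a)`,
`j ∈ ℤ`, `a ∈ I_p`, `1 ≤ n ≤ L`. -/
def waveletSystem {L : ℕ} (ψ : Fin L → ℚ_[p] → ℂ) : Set (Lp ℂ 2 (μp p)) :=
  {h | ∃ (n : Fin L) (j : ℤ) (a : ℚ_[p]), a ∈ Ip p ∧
        ∃ hm : MemLp (wdil p (ψ n) j a) 2 (μp p), h = hm.toLp _}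

/-- `ψ_1, …, ψ_L` is a multiwavelet for `L²(ℚ_p)`: the affine system
`{p^{j/2} ψ_n(p^{-j}· - a)}` is an orthonormal basis of `L²(ℚ_p)`. -/
def IsMultiwavelet {L : ℕ} (ψ : Fin L → ℚ_[p] → ℂ) : Prop :=
  (∀ (n n' : Fin L) (j j' : ℤ) (a a' : ℚ_[p]), a ∈ Ip p → a' ∈ Ip p →
      ∫ x, wdil p (ψ n) j a x * conj (wdil p (ψ n') j' a' x) ∂(μp p) =
        if n = n' ∧ j = j' ∧ a = a' then 1 else 0) ∧
  (Submodule.span ℂ (waveletSystem p ψ)).topologicalClosure = ⊤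

/-- A measurable set `W ⊆ ℚ_p` is a multiwavelet set of order `L` if
`W = W_1 ∪ … ∪ W_L` and the functions `ψ_n` with `ψ̂_n = 1_{W_n}` form a
multiwavelet for `L²(ℚ_p)`. -/
def IsMultiwaveletSet (L : ℕ) (W : Set ℚ_[p]) : Prop :=
  MeasurableSet W ∧
  ∃ Wn : Fin L → Set ℚ_[p], (∀ n, MeasurableSet (Wn n)) ∧ W = ⋃ n, Wn n ∧
    ∃ ψ : Fin L → ℚ_[p] → ℂ,
      (∀ n, FT p (ψ n) = Set.indicator (Wn n) 1) ∧ IsMultiwavelet p ψ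

/-- A measurable set `G ⊆ ℚ_p` is a generalized scaling set of order `L` if
`μ(G) = L/(p-1)` and `p⁻¹G \ G` is a multiwavelet set of order `L`. -/
def IsGeneralizedScalingSet (L : ℕ) (G : Set ℚ_[p]) : Prop :=
  MeasurableSet G ∧ μp p G = (L : ℝ≥0∞) / ((p : ℝ≥0∞) - 1) ∧
  IsMultiwaveletSet p L (dil p (p : ℚ_[p])⁻¹ G \ G)

/-- The class `D_N^M` of complex-valued functions on `ℚ_p` that are locally
constant with constancy parameter `p^{-M}` (i.e. `p^M`-periodic) and
supported on `B_N(0)`. -/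
def DNM (M N : ℤ) : Set (ℚ_[p] → ℂ) :=
  {f | (∀ x y : ℚ_[p], ‖y‖ ≤ (p : ℝ) ^ (-M) → f (x + y) = f x) ∧
       ∀ x : ℚ_[p], f x ≠ 0 → ‖x‖ ≤ (p : ℝ) ^ N}

/-- The space `V_j`: closure of the span of `{φ(p^{-j}· - a) : a ∈ I_p}`. -/
def Vspace (φ : ℚ_[p] → ℂ) (j : ℤ) : Submodule ℂ (Lp ℂ 2 (μp p)) :=
  (Submodule.span ℂ
    {h : Lp ℂ 2 (μp p) | ∃ a ∈ Ip p,
      ∃ hm : MemLp (fun x => φ ((p : ℚ_[p]) ^ (-j) * x - a)) 2 (μp p),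
        h = hm.toLp _}).topologicalClosure

/-- `m` is a trigonometric polynomial of degree `d`: a finite linear
combination `Σ_{a ∈ F} c_a χ_p(a ·)` of characters with translations in `I_p`,
with `d` nontrivial terms. -/
def IsTrigPolyOfDeg (m : ℚ_[p] → ℂ) (d : ℕ) : Prop :=
  ∃ (F : Finset ℚ_[p]) (c : ℚ_[p] → ℂ), (↑F : Set ℚ_[p]) ⊆ Ip p ∧
    (∀ a ∈ F, c a ≠ 0) ∧ (∀ ξ, m ξ = ∑ a ∈ F, c a * chi p (a * ξ)) ∧ F.card = d

/-- The set `J_{p,m}` of fractions `s_{-m}/p^m + … + s_{-1}/p` with digits in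
`{0,…,p-1}` and `s_{-m} ≠ 0`; equivalently `{k/p^m : 0 ≤ k < p^m, p ∤ k}`. -/
def Jpm (m : ℕ) : Set ℚ_[p] :=
  {x | ∃ k : ℕ, k < p ^ m ∧ ¬ (p : ℕ) ∣ k ∧ x = (k : ℚ_[p]) / (p : ℚ_[p]) ^ m}

open scoped Pointwise

instance : (μp p).IsAddHaarMeasure := Measure.isAddHaarMeasure_addHaarMeasure _

lemma μp_closedBall_one : μp p (Metric.closedBall 0 1) = 1 :=
  Measure.addHaarMeasure_self (K₀ := unitBallPC p)

lemma μp_closedBall_lt_one {r : ℝ} (hr : r < 1) : μp p (Metric.closedBall 0 r) < 1 := by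
  have hdisj : Disjoint (Metric.closedBall (0 : ℚ_[p]) r) (Metric.sphere 0 1) :=
    Metric.sphere_disjoint_ball.symm.mono_left (Metric.closedBall_subset_ball hr)
  have hsphere : 0 < μp p (Metric.sphere 0 1) :=
    (IsUltrametricDist.isOpen_sphere (0 : ℚ_[p]) one_ne_zero).measure_pos _ ⟨1, by simp⟩
  calc μp p (Metric.closedBall 0 r)
      < μp p (Metric.closedBall 0 r) + μp p (Metric.sphere 0 1) :=
        ENNReal.lt_add_right measure_closedBall_lt_top.ne hsphere.ne'
    _ = μp p (Metric.closedBall 0 r ∪ Metric.sphere 0 1) :=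
        (measure_union hdisj Metric.isClosed_sphere.measurableSet).symm
    _ ≤ μp p (Metric.closedBall 0 1) :=
        measure_mono (union_subset (Metric.closedBall_subset_closedBall hr.le)
          Metric.sphere_subset_closedBall)
    _ = 1 := μp_closedBall_one p

lemma norm_chi (x : ℚ_[p]) : ‖chi p x‖ = 1 := by
  rw [chi, show 2 * Real.pi * Complex.I * (padicFract p x : ℂ) =
    ((2 * Real.pi * (padicFract p x : ℝ) : ℝ) : ℂ) * Complex.I by push_cast; ring]
  exact Complex.norm_exp_ofReal_mul_I _

lemma invFT_eq_zero_of_not_hasFiniteIntegral {f : ℚ_[p] → ℂ}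
    (hf : ¬ HasFiniteIntegral f (μp p)) : invFT p f = 0 := by
  funext ξ
  refine integral_undef fun h => hf ((hasFiniteIntegral_congr' ?_).1 h.2)
  simp [norm_chi]

lemma IsScalingFunction.ne_zero {φ : ℚ_[p] → ℂ} (hφ : IsScalingFunction p φ) : φ ≠ 0 := by
  rintro rfl
  obtain ⟨V, hV⟩ := hφ
  simpa using hV.orthonormal 0 ⟨0, 0, by simp, by simp⟩ 0 ⟨0, 0, by simp, by simp⟩

lemma IsScalingSet.measure_lt_top {S : Set ℚ_[p]} (hS : IsScalingSet p S) : μp p S < ∞ := by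
  obtain ⟨hSm, hφ⟩ := hS
  by_contra hSinf
  refine hφ.ne_zero p (invFT_eq_zero_of_not_hasFiniteIntegral p fun hfin => hSinf ?_)
  have hint : Integrable (S.indicator (1 : ℚ_[p] → ℂ)) (μp p) :=
    ⟨(measurable_const.indicator hSm).aestronglyMeasurable, hfin⟩
  simpa [integrable_indicator_iff hSm, Pi.one_def, integrableOn_const_iff] using hint

lemma μp_dil (c : ℚ_[p]ˣ) (S : Set ℚ_[p]) :
    μp p (dil p c S) = distribHaarChar ℚ_[p] c * μp p S :=
  (distribHaarChar_mul (μp p) c S).symm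

def unitP : ℚ_[p]ˣ := Units.mk0 (p : ℚ_[p]) (Nat.cast_ne_zero.2 hp.out.ne_zero)

lemma distribHaarChar_unitP_lt_one : distribHaarChar ℚ_[p] (unitP p) < 1 := by
  have hball : unitP p • Metric.closedBall (0 : ℚ_[p]) 1 = Metric.closedBall 0 (p : ℝ)⁻¹ := by
    change (p : ℚ_[p]) • Metric.closedBall (0 : ℚ_[p]) 1 = _
    rw [smul_closedBall _ _ zero_le_one, smul_zero, Padic.norm_p, mul_one]
  have h := distribHaarChar_mul (μp p) (unitP p) (Metric.closedBall 0 1)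
  rw [hball, μp_closedBall_one, mul_one] at h
  have hp_inv_lt_one : (p : ℝ)⁻¹ < 1 := inv_lt_one_of_one_lt₀ (by exact_mod_cast hp.out.one_lt)
  exact_mod_cast h ▸ μp_closedBall_lt_one p hp_inv_lt_one

lemma tsum_μp_dil_pow_lt_top {S : Set ℚ_[p]} (hS : μp p S < ∞) :
    ∑' n : ℕ, μp p (dil p ((p : ℚ_[p]) ^ n) S) < ∞ := by
  have hpow (n : ℕ) : (p : ℚ_[p]) ^ n = ↑(unitP p ^ n) := by simp [unitP]
  simp_rw [hpow, μp_dil, map_pow, ENNReal.coe_pow, ENNReal.tsum_mul_right]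
  exact ENNReal.mul_lt_top
    (tsum_geometric_lt_top.2 (by exact_mod_cast distribHaarChar_unitP_lt_one p)) hS

/-- For a scaling set `S`, `lim_{n→∞} 1_{p^n S}(ξ) = 0`
for almost every `ξ ∈ ℚ_p`. -/
theorem stmt2 (S : Set ℚ_[p]) (hS : IsScalingSet p S) :
    ∀ᵐ ξ ∂(μp p),
      Tendsto (fun n : ℕ => Set.indicator (dil p ((p : ℚ_[p]) ^ n) S) (1 : ℚ_[p] → ℝ) ξ)
        atTop (𝓝 0) := by
  filter_upwards [ae_eventually_notMem (tsum_μp_dil_pow_lt_top p hS.measure_lt_top).ne]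
    with ξ hξ
  exact tendsto_const_nhds.congr' (hξ.mono fun n hn => (indicator_of_notMem hn _).symm)

end PadicScaling
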